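/- arXiv:1904.03166 — 2 statements merged into one kernel-verified Lean document; each statement's English description precedes it below -/
import Mathlib

section
/- Let Λ be a τ-tilting finite algebra and X = S_p ⊔ S_n[1] a semibrick pair singly left mutation compatible at S ∈ S_p, with mutation X' = μ⁺_S(X) having positive part S'_p. Then Filt(Fac S'_p) is strictly contained in Filt(Fac S_p); in particular S ∈ Filt(Fac S_p) \ Filt(Fac S'_p). -/
open CategoryTheory

universe u

variable {Λ : Type u} [Ring Λ]

/-- A short exact sequence of `Λ`-modules. -/
def IsSESeq {A E B : ModuleCat.{u} Λ} (i : A ⟶ E) (p : E ⟶ B) : Prop :=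
  Function.Injective i ∧ Function.Surjective p ∧ LinearMap.range i.hom = LinearMap.ker p.hom

/-- A brick: a nonzero module whose endomorphism ring is a division ring, i.e. every
nonzero endomorphism is invertible. -/
def IsBrick (M : ModuleCat.{u} Λ) : Prop :=
  Nontrivial M ∧ ∀ f : M ⟶ M, f ≠ 0 → IsIso f

/-- `FiltBy S M`: `M` admits a finite filtration with subquotients isomorphic to `S`
(the smallest class containing `0` and `S` closed under isomorphisms and extensions). -/
inductive FiltBy (S : ModuleCat.{u} Λ) : ModuleCat.{u} Λ → Prop
  | self : FiltBy S S
  | zero (M : ModuleCat.{u} Λ) : Subsingleton M → FiltBy S M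
  | iso (M N : ModuleCat.{u} Λ) : FiltBy S M → (M ≅ N) → FiltBy S N
  | ext (A E B : ModuleCat.{u} Λ) (i : A ⟶ E) (p : E ⟶ B) :
      FiltBy S A → FiltBy S B → IsSESeq i p → FiltBy S E

/-- `g : T ⟶ A` is a left minimal `Filt S`-approximation: `A ∈ Filt S`, every map from `T`
to an object of `Filt S` factors through `g`, and `g` is left minimal. -/
def IsMinLeftApprox (S : ModuleCat.{u} Λ) {T A : ModuleCat.{u} Λ} (g : T ⟶ A) : Prop :=
  FiltBy S A ∧
  (∀ X : ModuleCat.{u} Λ, FiltBy S X → ∀ h : T ⟶ X, ∃ hfac : A ⟶ X, g ≫ hfac = h) ∧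
  (∀ φ : A ⟶ A, g ≫ φ = g → IsIso φ)

/-- A semibrick pair \`X = Sp ⊔ Sn[1]\`: \`Sp\` and \`Sn\` are semibricks (sets of pairwise
Hom-orthogonal bricks) with \`Hom(Sp, Sn) = 0\` and \`Ext¹(Sp, Sn) = 0\` (every short exact
sequence with sub in \`Sn\` and quotient in \`Sp\` splits). -/
def IsSemibrickPair (Sp Sn : Set (ModuleCat.{u} Λ)) : Prop :=
  (∀ M ∈ Sp, IsBrick M) ∧ (∀ M ∈ Sn, IsBrick M) ∧
  (∀ M ∈ Sp, ∀ N ∈ Sp, M ≠ N → ∀ f : M ⟶ N, f = 0) ∧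
  (∀ M ∈ Sn, ∀ N ∈ Sn, M ≠ N → ∀ f : M ⟶ N, f = 0) ∧
  (∀ M ∈ Sp, ∀ N ∈ Sn, ∀ f : M ⟶ N, f = 0) ∧
  (∀ M ∈ Sp, ∀ N ∈ Sn, ∀ (E : ModuleCat.{u} Λ) (i : N ⟶ E) (p : E ⟶ M),
    IsSESeq i p → ∃ r : E ⟶ N, i ≫ r = 𝟙 N)

/-- The short exact sequence `A ↪ E ↠ T` (an extension class in `Ext¹(T, A)`, i.e. a map
`T[-1] ⟶ A` in the derived category) is a left minimal `Filt S`-approximation of `T[-1]`: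
`A ∈ Filt S`, every extension of `T` by an object of `Filt S` is a pushout of it, and it is
left minimal. -/
def IsMinExtApprox (S T A E : ModuleCat.{u} Λ) (i : A ⟶ E) (p : E ⟶ T) : Prop :=
  FiltBy S A ∧ IsSESeq i p ∧
  (∀ X : ModuleCat.{u} Λ, FiltBy S X →
    ∀ (F : ModuleCat.{u} Λ) (i' : X ⟶ F) (p' : F ⟶ T), IsSESeq i' p' →
      ∃ (h : A ⟶ X) (k : E ⟶ F), i ≫ k = h ≫ i' ∧ k ≫ p' = p) ∧
  (∀ φ : A ⟶ A, (∃ k : E ⟶ E, i ≫ k = φ ≫ i ∧ k ≫ p = p) → IsIso φ)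

/-- `X = Sp ⊔ Sn[1]` is singly left mutation compatible at `S ∈ Sp`: for every `T ∈ Sn`,
any left minimal `Filt S`-approximation `T ⟶ S_T` is a monomorphism or an epimorphism. -/
def SinglyLeftMutCompatAt (Sp Sn : Set (ModuleCat.{u} Λ)) (S : ModuleCat.{u} Λ) : Prop :=
  S ∈ Sp ∧ ∀ T ∈ Sn, ∀ (A : ModuleCat.{u} Λ) (g : T ⟶ A),
    IsMinLeftApprox S g → Mono g ∨ Epi g
/-- `TorsionClosure 𝒮` is `Filt (Fac 𝒮)`, the torsion class generated by `𝒮`: the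
smallest class of modules containing `𝒮` and `0` and closed under quotients (epimorphic
images, which includes isomorphic images) and extensions. -/
inductive TorsionClosure (𝒮 : Set (ModuleCat.{u} Λ)) : ModuleCat.{u} Λ → Prop
  | base (M : ModuleCat.{u} Λ) : M ∈ 𝒮 → TorsionClosure 𝒮 M
  | zero (M : ModuleCat.{u} Λ) : Subsingleton M → TorsionClosure 𝒮 M
  | quot (M N : ModuleCat.{u} Λ) (f : M ⟶ N) :
      TorsionClosure 𝒮 M → Function.Surjective f → TorsionClosure 𝒮 N
  | ext (A E B : ModuleCat.{u} Λ) (i : A ⟶ E) (p : E ⟶ B) :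
      TorsionClosure 𝒮 A → TorsionClosure 𝒮 B → IsSESeq i p → TorsionClosure 𝒮 E

/-- A torsion class in `mod Λ`: a class of finitely generated modules closed under
isomorphisms, quotients and extensions. -/
def IsTorsionClass (T : Set (ModuleCat.{u} Λ)) : Prop :=
  (∀ M ∈ T, Module.Finite Λ M) ∧
  (∀ M ∈ T, ∀ N : ModuleCat.{u} Λ, Module.Finite Λ N → (M ≅ N) → N ∈ T) ∧
  (∀ M ∈ T, ∀ (N : ModuleCat.{u} Λ) (f : M ⟶ N), Module.Finite Λ N →
    Function.Surjective f → N ∈ T) ∧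
  (∀ (A E B : ModuleCat.{u} Λ) (i : A ⟶ E) (p : E ⟶ B), Module.Finite Λ E →
    IsSESeq i p → A ∈ T → B ∈ T → E ∈ T)

lemma factor_of_surj {A B S : ModuleCat.{u} Λ} (p : A ⟶ B) (hp : Function.Surjective p)
    (f : A ⟶ S) (hker : LinearMap.ker p.hom ≤ LinearMap.ker f.hom) :
    ∃ g : B ⟶ S, p ≫ g = f := by
  let e := LinearMap.quotKerEquivOfSurjective p.hom hp
  refine ⟨ModuleCat.ofHom (((LinearMap.ker p.hom).liftQ f.hom hker).comp
      e.symm.toLinearMap), ?_⟩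
  refine ModuleCat.hom_ext (LinearMap.ext fun x => ?_)
  have h1 : e.symm (p x) = Submodule.Quotient.mk x := by
    apply e.injective
    simp [e, LinearMap.quotKerEquivOfSurjective]
  show ((LinearMap.ker p.hom).liftQ f.hom hker) (e.symm (p x)) = f x
  rw [h1]
  rfl

-- key lemma: a nonzero map from Filt S to a brick S is surjective with kernel in Filt S

lemma filt_hom_to_brick {S : ModuleCat.{u} Λ} (hS : IsBrick S) {A : ModuleCat.{u} Λ}
    (hA : FiltBy S A) : ∀ a : A ⟶ S,
      a = 0 ∨ (Function.Surjective a ∧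
        FiltBy S (ModuleCat.of Λ ↥(LinearMap.ker a.hom))) := by
  induction hA with
  | self =>
    intro a
    by_cases ha : a = 0
    · exact Or.inl ha
    · right
      have hiso : IsIso a := hS.2 a ha
      have hbij : Function.Bijective a := by
        constructor
        · rw [← ModuleCat.mono_iff_injective]; infer_instance
        · rw [← ModuleCat.epi_iff_surjective]; infer_instance
      refine ⟨hbij.2, FiltBy.zero _ ?_⟩
      refine ⟨fun x y => Subtype.ext ?_⟩
      have hx : a x.1 = a y.1 := by
        rw [x.2, y.2]
      exact hbij.1 hx
  | zero M hM =>
    intro a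
    left
    exact ModuleCat.hom_ext (LinearMap.ext fun x => by rw [Subsingleton.elim x 0]; simp)
  | iso M N hM e IH =>
    intro a
    rcases IH (e.hom ≫ a) with h0 | ⟨hsurj, hker⟩
    · left
      have : a = e.inv ≫ (e.hom ≫ a) := by simp
      rw [this, h0]
      simp
    · right
      have hsurj' : Function.Surjective a := fun s => by
        obtain ⟨x, hx⟩ := hsurj s
        exact ⟨e.hom x, hx⟩
      refine ⟨hsurj', FiltBy.iso _ _ hker ?_⟩
      -- iso between ker (e.hom ≫ a) and ker a
      refine ⟨ModuleCat.ofHom (LinearMap.restrict e.hom.hom ?_),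
              ModuleCat.ofHom (LinearMap.restrict e.inv.hom ?_), ?_, ?_⟩
      · intro x hx
        exact hx
      · intro x hx
        show a (e.hom (e.inv x)) = 0
        have h2 : e.hom (e.inv x) = x :=
          congrArg (fun (f : N ⟶ N) => f x) e.inv_hom_id
        rw [h2]
        exact hx
      · refine ModuleCat.hom_ext (LinearMap.ext fun x => Subtype.ext ?_)
        show e.inv (e.hom x.1) = x.1
        exact congrArg (fun (f : M ⟶ M) => f x.1) e.hom_inv_id
      · refine ModuleCat.hom_ext (LinearMap.ext fun x => Subtype.ext ?_)
        show e.hom (e.inv x.1) = x.1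
        exact congrArg (fun (f : N ⟶ N) => f x.1) e.inv_hom_id
  | ext A1 A A2 i p hA1 hA2 hses IH1 IH2 =>
    intro a
    by_cases ha : a = 0
    · exact Or.inl ha
    right
    obtain ⟨hi_inj, hp_surj, hrange⟩ := hses
    rcases IH1 (i ≫ a) with h0 | ⟨hsurj1, hker1⟩
    · -- a kills range i, factors through A2
      have hle : LinearMap.ker p.hom ≤ LinearMap.ker a.hom := by
        intro x hx
        rw [← hrange] at hx
        obtain ⟨y, rfl⟩ := hx
        show a (i y) = 0
        exact congrArg (fun (f : A1 ⟶ S) => f y) h0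
      obtain ⟨abar, habar⟩ := factor_of_surj p hp_surj a hle
      have habar_ne : abar ≠ 0 := by
        intro h
        apply ha
        rw [← habar, h]
        simp
      rcases IH2 abar with h0' | ⟨hsurj2, hker2⟩
      · exact absurd h0' habar_ne
      have hasurj : Function.Surjective a := by
        intro s
        obtain ⟨y, hy⟩ := hsurj2 s
        obtain ⟨x, hx⟩ := hp_surj y
        refine ⟨x, ?_⟩
        have : a x = abar (p x) := (congrArg (fun (f : A ⟶ S) => f x) habar).symm
        rw [this, hx, hy]
      refine ⟨hasurj, ?_⟩
      -- SES: A1 → ker a → ker abar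
      have hmem1 : ∀ x : A1, (i x) ∈ LinearMap.ker a.hom := by
        intro x
        show a (i x) = 0
        exact congrArg (fun (f : A1 ⟶ S) => f x) h0
      have aeq : ∀ x : A, a x = abar (p x) :=
        fun x => (congrArg (fun (f : A ⟶ S) => f x) habar).symm
      refine FiltBy.ext A1 _ (ModuleCat.of Λ ↥(LinearMap.ker abar.hom))
        (ModuleCat.ofHom (LinearMap.codRestrict _ i.hom hmem1))
        (ModuleCat.ofHom (LinearMap.restrict p.hom (fun x hx => by
          show abar (p x) = 0
          rw [← aeq x]; exact hx))) hA1 hker2 ⟨?_, ?_, ?_⟩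
      · intro x y hxy
        apply hi_inj
        exact congrArg Subtype.val hxy
      · rintro ⟨y, hy⟩
        obtain ⟨x, hx⟩ := hp_surj y
        have hxk : x ∈ LinearMap.ker a.hom := by
          show a x = 0
          rw [aeq x, hx]
          exact hy
        exact ⟨⟨x, hxk⟩, Subtype.ext hx⟩
      · ext ⟨x, hx⟩
        constructor
        · rintro ⟨y, hy⟩
          rw [LinearMap.mem_ker, ← hy]
          refine Subtype.ext ?_
          show p (i y) = 0
          have : i y ∈ LinearMap.ker p.hom := by
            rw [← hrange]; exact ⟨y, rfl⟩
          exact this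
        · intro hx2
          have hpx : p x = 0 := congrArg Subtype.val hx2
          have : x ∈ LinearMap.range i.hom := hrange ▸ hpx
          obtain ⟨y, hy⟩ := this
          exact ⟨y, Subtype.ext hy⟩
    · -- i ≫ a surjective
      have hasurj : Function.Surjective a := by
        intro s
        obtain ⟨y, hy⟩ := hsurj1 s
        exact ⟨i y, hy⟩
      refine ⟨hasurj, ?_⟩
      -- SES: ker (i ≫ a) → ker a → A2
      refine FiltBy.ext (ModuleCat.of Λ ↥(LinearMap.ker (i ≫ a).hom)) _ A2
        (ModuleCat.ofHom (LinearMap.restrict i.hom (fun x hx => by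
          show a (i x) = 0; exact hx)))
        (ModuleCat.ofHom (p.hom.comp (LinearMap.ker a.hom).subtype))
        hker1 hA2 ⟨?_, ?_, ?_⟩
      · intro x y hxy
        exact Subtype.ext (hi_inj (congrArg Subtype.val hxy))
      · intro x2
        obtain ⟨x, hx⟩ := hp_surj x2
        obtain ⟨y, hy⟩ := hsurj1 (a x)
        have hk : x - i y ∈ LinearMap.ker a.hom := by
          show a (x - i y) = 0
          rw [map_sub]
          have : a (i y) = a x := hy
          rw [this, sub_self]
        refine ⟨⟨x - i y, hk⟩, ?_⟩
        show p (x - i y) = x2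
        rw [map_sub, hx]
        have : i y ∈ LinearMap.ker p.hom := by
          rw [← hrange]; exact ⟨y, rfl⟩
        rw [show p (i y) = 0 from this, sub_zero]
      · ext ⟨x, hx⟩
        constructor
        · rintro ⟨y, hy⟩
          rw [LinearMap.mem_ker, ← hy]
          show p (i y.1) = 0
          have : i y.1 ∈ LinearMap.ker p.hom := by
            rw [← hrange]; exact ⟨y.1, rfl⟩
          exact this
        · intro hpx
          have hpx' : p x = 0 := hpx
          have : x ∈ LinearMap.range i.hom := hrange ▸ hpx'
          obtain ⟨y, hy⟩ := this
          have hyk : y ∈ LinearMap.ker (i ≫ a).hom := by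
            show a (i y) = 0
            rw [hy]; exact hx
          exact ⟨⟨y, hyk⟩, Subtype.ext hy⟩

lemma surj_of_isIso {A B : ModuleCat.{u} Λ} (f : A ⟶ B) [IsIso f] :
    Function.Surjective f := by
  rw [← ModuleCat.epi_iff_surjective]; infer_instance

lemma exists_ne_zero_of_ne_zero {A B : ModuleCat.{u} Λ} {f : A ⟶ B} (hf : f ≠ 0) :
    ∃ x : A, f x ≠ 0 := by
  by_contra hc
  push_neg at hc
  exact hf (ModuleCat.hom_ext (LinearMap.ext fun x => by rw [hc x]; rfl))

-- Hom(coker g, S) = 0 for a minimal left approximation g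
open Limits in
lemma hom_coker_vanish {S T A : ModuleCat.{u} Λ} (hS : IsBrick S)
    (g : T ⟶ A) (hg : IsMinLeftApprox S g) (f : cokernel g ⟶ S) : f = 0 := by
  set h : A ⟶ S := cokernel.π g ≫ f with hh_def
  have hgh : g ≫ h = 0 := by
    rw [hh_def, ← Category.assoc, cokernel.condition, zero_comp]
  by_cases hh : h = 0
  · have : cokernel.π g ≫ f = cokernel.π g ≫ 0 := by rw [comp_zero]; exact hh
    exact (cancel_epi (cokernel.π g)).mp this
  exfalso
  rcases filt_hom_to_brick hS hg.1 h with h0 | ⟨hsurj, hker⟩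
  · exact hh h0
  obtain ⟨x0, hx0⟩ := exists_ne_zero_of_ne_zero hh
  have hmem : ∀ x : T, g x ∈ LinearMap.ker h.hom :=
    fun x => congrArg (fun (f' : T ⟶ S) => f' x) hgh
  obtain ⟨fac, hfac⟩ := hg.2.1 _ hker
    (ModuleCat.ofHom (LinearMap.codRestrict (LinearMap.ker h.hom) g.hom hmem))
  set φ : A ⟶ A := fac ≫ ModuleCat.ofHom (LinearMap.ker h.hom).subtype with hφ_def
  have hgφ : g ≫ φ = g := by
    refine ModuleCat.hom_ext (LinearMap.ext fun x => ?_)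
    have h1 : (g ≫ fac) x
        = (LinearMap.codRestrict (LinearMap.ker h.hom) g.hom hmem) x :=
      congrArg (fun (f' : T ⟶ ModuleCat.of Λ ↥(LinearMap.ker h.hom)) => f' x) hfac
    show (LinearMap.ker h.hom).subtype ((g ≫ fac) x) = g x
    rw [h1]
    rfl
  have hiso : IsIso φ := hg.2.2 φ hgφ
  obtain ⟨z, hz⟩ := surj_of_isIso φ x0
  apply hx0
  rw [← hz]
  exact (fac z).2

lemma hom_ext_vanish {S T A E : ModuleCat.{u} Λ} (hS : IsBrick S)
    (i : A ⟶ E) (p : E ⟶ T) (happ : IsMinExtApprox S T A E i p)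
    (hTS : ∀ f' : T ⟶ S, f' = 0) (f : E ⟶ S) : f = 0 := by
  obtain ⟨hFA, ⟨hi_inj, hp_surj, hrange⟩, hpush, hmin⟩ := happ
  set a : A ⟶ S := i ≫ f with ha_def
  by_cases ha : a = 0
  · have hle : LinearMap.ker p.hom ≤ LinearMap.ker f.hom := by
      intro x hx
      rw [← hrange] at hx
      obtain ⟨y, rfl⟩ := hx
      show f (i y) = 0
      exact congrArg (fun (f' : A ⟶ S) => f' y) ha
    obtain ⟨fbar, hfbar⟩ := factor_of_surj p hp_surj f hle
    rw [← hfbar, hTS fbar, Limits.comp_zero]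
  exfalso
  rcases filt_hom_to_brick hS hFA a with h0 | ⟨hsurj, hker⟩
  · exact ha h0
  obtain ⟨x0, hx0⟩ := exists_ne_zero_of_ne_zero ha
  -- the subextension ker f of E
  set K := ModuleCat.of Λ ↥(LinearMap.ker a.hom)
  set F := ModuleCat.of Λ ↥(LinearMap.ker f.hom)
  have hmapsto : ∀ x ∈ LinearMap.ker a.hom,
      i x ∈ LinearMap.ker f.hom := fun x hx => hx
  set i' : K ⟶ F := ModuleCat.ofHom (LinearMap.restrict i.hom hmapsto) with hi'_def
  set p' : F ⟶ T := ModuleCat.ofHom (p.hom.comp (LinearMap.ker f.hom).subtype)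
    with hp'_def
  have hpi : ∀ y : A, p (i y) = 0 := by
    intro y
    have : i y ∈ LinearMap.ker p.hom := by
      rw [← hrange]; exact ⟨y, rfl⟩
    exact this
  have hses' : IsSESeq i' p' := by
    refine ⟨?_, ?_, ?_⟩
    · intro x y hxy
      exact Subtype.ext (hi_inj (congrArg Subtype.val hxy))
    · intro t
      obtain ⟨x, hx⟩ := hp_surj t
      obtain ⟨y, hy⟩ := hsurj (f x)
      have hk : x - i y ∈ LinearMap.ker f.hom := by
        show f (x - i y) = 0
        rw [map_sub]
        have : f (i y) = f x := hy
        rw [this, sub_self]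
      refine ⟨⟨x - i y, hk⟩, ?_⟩
      show p (x - i y) = t
      rw [map_sub, hx, hpi y, sub_zero]
    · ext ⟨x, hx⟩
      constructor
      · rintro ⟨y, hy⟩
        rw [LinearMap.mem_ker, ← hy]
        show p (i y.1) = 0
        exact hpi y.1
      · intro hpx
        have hpx' : p x = 0 := hpx
        have : x ∈ LinearMap.range i.hom := by rw [hrange]; exact hpx'
        obtain ⟨y, hy⟩ := this
        have hyk : y ∈ LinearMap.ker a.hom := by
          show f (i y) = 0
          rw [hy]; exact hx
        exact ⟨⟨y, hyk⟩, Subtype.ext hy⟩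
  obtain ⟨h, k, hik, hkp⟩ := hpush K hker F i' p' hses'
  set φ : A ⟶ A := h ≫ ModuleCat.ofHom (LinearMap.ker a.hom).subtype with hφ_def
  have hiso : IsIso φ := by
    refine hmin φ ⟨k ≫ ModuleCat.ofHom (LinearMap.ker f.hom).subtype, ?_, ?_⟩
    · refine ModuleCat.hom_ext (LinearMap.ext fun x => ?_)
      have h1 : (i ≫ k) x = (h ≫ i') x := congrArg (fun (f' : A ⟶ F) => f' x) hik
      show (LinearMap.ker f.hom).subtype ((i ≫ k) x)
        = i ((LinearMap.ker a.hom).subtype (h x))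
      rw [h1]
      rfl
    · refine ModuleCat.hom_ext (LinearMap.ext fun x => ?_)
      show p ((LinearMap.ker f.hom).subtype (k x)) = p x
      exact congrArg (fun (f' : E ⟶ T) => f' x) hkp
  obtain ⟨z, hz⟩ := surj_of_isIso φ x0
  apply hx0
  rw [← hz]
  exact (h z).2

lemma tc_of_filtBy {Sp : Set (ModuleCat.{u} Λ)} {S : ModuleCat.{u} Λ} (hS : S ∈ Sp)
    {A : ModuleCat.{u} Λ} (hA : FiltBy S A) : TorsionClosure Sp A := by
  induction hA with
  | self => exact TorsionClosure.base S hS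
  | zero M hM => exact TorsionClosure.zero M hM
  | iso M N hM e IH => exact TorsionClosure.quot M N e.hom IH (surj_of_isIso e.hom)
  | ext A E B i p hA hB hses IHA IHB => exact TorsionClosure.ext A E B i p IHA IHB hses

open Limits in
/-- Let `Λ` be a τ-tilting finite algebra and `X = Sp ⊔ Sn[1]` a
semibrick pair singly left mutation compatible at `S ∈ Sp`, with mutation
`X' = μ⁺_S(X)` having positive part `Sp'`. Then `Filt (Fac Sp') ⊊ Filt (Fac Sp)`;
in particular `S ∈ Filt (Fac Sp) \ Filt (Fac Sp')`. -/
theorem stmt13 {K : Type} [Field K] {Λ : Type} [Ring Λ] [Algebra K Λ] [FiniteDimensional K Λ]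
    (htau : {T : Set (ModuleCat Λ) | IsTorsionClass T}.Finite)
    (Sp Sn : Set (ModuleCat Λ)) (hX : IsSemibrickPair Sp Sn)
    (S : ModuleCat Λ) (hcompat : SinglyLeftMutCompatAt Sp Sn S)
    -- chosen left minimal approximations of the negative part
    (An : {T // T ∈ Sn} → ModuleCat Λ) (g : ∀ T : {T // T ∈ Sn}, (T : ModuleCat Λ) ⟶ An T)
    (hg : ∀ T : {T // T ∈ Sn}, IsMinLeftApprox S (g T))
    -- chosen left minimal approximations (extension classes) of the positive part
    (Ap Ep : {T // T ∈ Sp ∧ T ≠ S} → ModuleCat Λ)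
    (ip : ∀ T : {T // T ∈ Sp ∧ T ≠ S}, Ap T ⟶ Ep T)
    (pp : ∀ T : {T // T ∈ Sp ∧ T ≠ S}, Ep T ⟶ (T : ModuleCat Λ))
    (hp : ∀ T : {T // T ∈ Sp ∧ T ≠ S}, IsMinExtApprox S T.1 (Ap T) (Ep T) (ip T) (pp T))
    -- the positive part of the mutation
    (Sp' : Set (ModuleCat Λ))
    (hSp' : Sp' = (Set.range fun T : {T // T ∈ Sp ∧ T ≠ S} => Ep T) ∪
      (Set.range fun T : {T : {T // T ∈ Sn} // Mono (g T)} => cokernel (g T.1))) :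
    (∀ M : ModuleCat Λ, TorsionClosure Sp' M → TorsionClosure Sp M) ∧
    TorsionClosure Sp S ∧ ¬ TorsionClosure Sp' S := by
  
  have hSbrick : IsBrick S := hX.1 S hcompat.1
  have hvan : ∀ M : ModuleCat Λ, TorsionClosure Sp' M → ∀ f : M ⟶ S, f = 0 := by
    intro M hM
    induction hM with
    | base M hMmem =>
      rw [hSp'] at hMmem
      simp only [Set.mem_union, Set.mem_range] at hMmem
      rcases hMmem with ⟨T, rfl⟩ | ⟨T, rfl⟩
      · exact fun f => hom_ext_vanish hSbrick (ip T) (pp T) (hp T)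
          (fun f' => hX.2.2.1 T.1 T.2.1 S hcompat.1 T.2.2 f') f
      · exact fun f => hom_coker_vanish hSbrick (g T.1) (hg T.1) f
    | zero M hM =>
      intro f
      exact ModuleCat.hom_ext (LinearMap.ext fun x => by rw [Subsingleton.elim x 0]; simp)
    | quot M N q hM hq IH =>
      intro f
      refine ModuleCat.hom_ext (LinearMap.ext fun y => ?_)
      obtain ⟨x, rfl⟩ := hq y
      have h1 : (q ≫ f) x = (0 : M ⟶ S) x :=
        congrArg (fun (f' : M ⟶ S) => f' x) (IH (q ≫ f))
      exact h1
    | ext A E B i p hA hB hses IHA IHB =>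
      intro f
      have hle : LinearMap.ker p.hom ≤ LinearMap.ker f.hom := by
        intro x hx
        rw [← hses.2.2] at hx
        obtain ⟨y, rfl⟩ := hx
        show f (i y) = 0
        exact congrArg (fun (f' : A ⟶ S) => f' y) (IHA (i ≫ f))
      obtain ⟨fbar, hfbar⟩ := factor_of_surj p hses.2.1 f hle
      rw [← hfbar, IHB fbar, Limits.comp_zero]
  refine ⟨?_, TorsionClosure.base S hcompat.1, ?_⟩
  · intro M hM
    induction hM with
    | base M hMmem =>
      rw [hSp'] at hMmem
      simp only [Set.mem_union, Set.mem_range] at hMmem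
      rcases hMmem with ⟨T, rfl⟩ | ⟨T, rfl⟩
      · exact TorsionClosure.ext (Ap T) (Ep T) T.1 (ip T) (pp T)
          (tc_of_filtBy hcompat.1 (hp T).1) (TorsionClosure.base T.1 T.2.1) (hp T).2.1
      · exact TorsionClosure.quot (An T.1) _ (cokernel.π (g T.1))
          (tc_of_filtBy hcompat.1 (hg T.1).1)
          ((ModuleCat.epi_iff_surjective _).mp inferInstance)
    | zero M hM => exact TorsionClosure.zero M hM
    | quot M N q hM hq IH => exact TorsionClosure.quot M N q IH hq
    | ext A E B i p hA hB hses IHA IHB => exact TorsionClosure.ext A E B i p IHA IHB hses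
  · intro hScl
    have h1 : (𝟙 S : S ⟶ S) = 0 := hvan S hScl (𝟙 S)
    obtain ⟨x, y, hxy⟩ := hSbrick.1
    apply hxy
    have hx : x = (0 : S ⟶ S) x := congrArg (fun (f' : S ⟶ S) => f' x) h1
    have hy : y = (0 : S ⟶ S) y := congrArg (fun (f' : S ⟶ S) => f' y) h1
    rw [hx, hy]
    rfl
end

section
/- Let Λ be a finite-dimensional hereditary algebra. Then every semibrick pair X = S_p ⊔ S_n[1] is singly left mutation compatible: for every S ∈ S_p and T ∈ S_n, any left minimal Filt(S)-approximation g : T → S_T is a monomorphism or an epimorphism. -/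
open CategoryTheory

universe u

variable {Λ : Type u} [Ring Λ]

lemma aux_sec_of_retr {R : Type*} [Ring R] {T F A : Type*}
    [AddCommGroup T] [Module R T] [AddCommGroup F] [Module R F] [AddCommGroup A] [Module R A]
    (j : T →ₗ[R] F) (q : F →ₗ[R] A) (hq : Function.Surjective q)
    (hk : LinearMap.range j = LinearMap.ker q) (r : F →ₗ[R] T) (hr : ∀ t, r (j t) = t) :
    ∃ s : A →ₗ[R] F, ∀ a, q (s a) = a := by
  have hker : LinearMap.ker q ≤ LinearMap.ker ((LinearMap.id : F →ₗ[R] F) - j ∘ₗ r) := by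
    intro x hx
    rw [← hk] at hx
    obtain ⟨t, rfl⟩ := hx
    simp [LinearMap.mem_ker, hr t]
  set e := q.quotKerEquivOfSurjective hq with he
  refine ⟨(Submodule.liftQ _ _ hker) ∘ₗ (e.symm : A →ₗ[R] F ⧸ LinearMap.ker q), fun a => ?_⟩
  obtain ⟨x, rfl⟩ := hq a
  have h1 : e (Submodule.Quotient.mk x) = q x := rfl
  have h2 : e.symm (q x) = Submodule.Quotient.mk x := by rw [← h1, e.symm_apply_apply]
  simp only [LinearMap.comp_apply, LinearEquiv.coe_coe, h2, Submodule.liftQ_apply]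
  have hjr : q (j (r x)) = 0 := by
    have : j (r x) ∈ LinearMap.ker q := hk ▸ LinearMap.mem_range_self j (r x)
    exact this
  simp [LinearMap.sub_apply, map_sub, hjr]

lemma aux_isiso_inj {Λ : Type u} [Ring Λ] {M N : ModuleCat.{u} Λ} (f : M ⟶ N) (hf : IsIso f) :
    Function.Injective f := by
  intro a b h
  have h1 : (CategoryTheory.inv f) (f a) = a := by
    rw [← ConcreteCategory.comp_apply, IsIso.hom_inv_id, ConcreteCategory.id_apply]
  have h2 : (CategoryTheory.inv f) (f b) = b := by
    rw [← ConcreteCategory.comp_apply, IsIso.hom_inv_id, ConcreteCategory.id_apply]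
  rw [← h1, ← h2, h]

lemma filt_split {S T : ModuleCat.{u} Λ}
    (hbase : ∀ (F : ModuleCat.{u} Λ) (j : T ⟶ F) (q : F ⟶ S), IsSESeq j q →
      ∃ r : F ⟶ T, j ≫ r = 𝟙 T)
    {A : ModuleCat.{u} Λ} (hA : FiltBy S A) :
    ∀ (F : ModuleCat.{u} Λ) (j : T ⟶ F) (q : F ⟶ A), IsSESeq j q →
      ∃ r : F ⟶ T, j ≫ r = 𝟙 T := by
  induction hA with
  | self => exact hbase
  | zero M hM =>
    intro F j q hses
    obtain ⟨hj, hq, hk⟩ := hses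
    have hzero : ∀ x : F, q x = 0 := fun x => Subsingleton.elim _ _
    have hrange : LinearMap.range j.hom = ⊤ := by
      rw [hk]
      exact eq_top_iff.2 fun x _ => hzero x
    have hsur : Function.Surjective j := LinearMap.range_eq_top.mp hrange
    let e := LinearEquiv.ofBijective j.hom ⟨hj, hsur⟩
    refine ⟨ModuleCat.ofHom (e.symm : F →ₗ[Λ] T), ?_⟩
    ext t
    exact e.symm_apply_apply t
  | iso M N hM e IH =>
    intro F j q hses
    obtain ⟨hj, hq, hk⟩ := hses
    have h1 : ∀ x : N, e.hom (e.inv x) = x := fun x => by simp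
    have h2 : ∀ x : M, e.inv (e.hom x) = x := fun x => by simp
    have hinv_inj : Function.Injective e.inv := fun x y hxy => by
      rw [← h1 x, ← h1 y, hxy]
    have hinv_sur : Function.Surjective e.inv := fun m => ⟨e.hom m, h2 m⟩
    refine IH F j (q ≫ e.inv) ⟨hj, ?_, ?_⟩
    · intro m
      obtain ⟨y, hy⟩ := hinv_sur m
      obtain ⟨x, hx⟩ := hq y
      exact ⟨x, by show e.inv (q x) = m; rw [hx, hy]⟩
    · rw [hk]
      ext x
      constructor
      · intro hx
        show e.inv (q x) = 0
        rw [show q x = 0 from hx, map_zero]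
      · intro hx
        have : e.inv (q x) = 0 := hx
        show q x = 0
        have := congrArg e.hom this
        rwa [h1, map_zero] at this
  | ext A' E' B' i p hA' hB' hses0 IHA IHB =>
    intro F j q hses
    obtain ⟨hi, hp, hip⟩ := hses0
    obtain ⟨hj, hq, hk⟩ := hses
    have hqj : ∀ t, q (j t) = 0 := fun t => by
      have : j t ∈ LinearMap.ker q.hom := hk ▸ LinearMap.mem_range_self j.hom t
      exact this
    let FA : Submodule Λ F := Submodule.comap q.hom (LinearMap.range i.hom)
    have hjFA : ∀ t, j t ∈ FA := fun t => by
      show q (j t) ∈ LinearMap.range i.hom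
      rw [hqj t]; exact zero_mem _
    let j' : T →ₗ[Λ] FA := LinearMap.codRestrict FA j.hom hjFA
    let eI := LinearEquiv.ofInjective i.hom hi
    let q0 : FA →ₗ[Λ] LinearMap.range i.hom :=
      LinearMap.codRestrict _ (q.hom ∘ₗ FA.subtype) (fun x => x.2)
    let q' : FA →ₗ[Λ] A' := (eI.symm : LinearMap.range i.hom →ₗ[Λ] A') ∘ₗ q0
    have hq'i : ∀ x : FA, i (q' x) = q x.val := fun x => by
      show i (eI.symm (q0 x)) = q x.val
      have h := eI.apply_symm_apply (q0 x)
      calc i (eI.symm (q0 x)) = ((eI (eI.symm (q0 x))) : E') := by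
            rw [LinearEquiv.ofInjective_apply]
        _ = ((q0 x : LinearMap.range i.hom) : E') := by rw [h]
        _ = q x.val := rfl
    have hq'sur : Function.Surjective q' := fun a => by
      obtain ⟨f, hf⟩ := hq (i a)
      have hfFA : f ∈ FA := by
        show q f ∈ LinearMap.range i.hom
        rw [hf]; exact LinearMap.mem_range_self _ a
      refine ⟨⟨f, hfFA⟩, ?_⟩
      apply hi
      rw [hq'i ⟨f, hfFA⟩]; exact hf
    have hj'inj : Function.Injective j' := fun x y hxy => hj (congrArg Subtype.val hxy)
    have hkq' : LinearMap.range j' = LinearMap.ker q' := by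
      ext x
      constructor
      · rintro ⟨t, rfl⟩
        show q' (j' t) = 0
        apply hi
        rw [hq'i, map_zero]
        show q (j t) = 0
        exact hqj t
      · intro hx
        have hx' : q' x = 0 := hx
        have hqx : q x.val = 0 := by rw [← hq'i x, hx', map_zero]
        have : x.val ∈ LinearMap.range j.hom := by rw [hk]; exact hqx
        obtain ⟨t, ht⟩ := this
        exact ⟨t, Subtype.ext ht⟩
    obtain ⟨rA, hrA⟩ := IHA (ModuleCat.of Λ FA) (ModuleCat.ofHom j') (ModuleCat.ofHom q') ⟨hj'inj, hq'sur, hkq'⟩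
    have hrA' : ∀ t, rA (j' t) = t := fun t => ConcreteCategory.congr_hom hrA t
    let N : Submodule Λ F := Submodule.map FA.subtype (LinearMap.ker rA.hom)
    have hNle : N ≤ LinearMap.ker (p.hom ∘ₗ q.hom) := by
      rintro x ⟨y, hy, rfl⟩
      show p (q (FA.subtype y)) = 0
      have hy2 : q y.val ∈ LinearMap.range i.hom := y.2
      rw [hip] at hy2
      exact hy2
    let j'' : T →ₗ[Λ] (F ⧸ N) := N.mkQ ∘ₗ j.hom
    let q'' : (F ⧸ N) →ₗ[Λ] B' := Submodule.liftQ N _ hNle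
    have hj''inj : Function.Injective j'' := by
      rw [← LinearMap.ker_eq_bot, LinearMap.ker_eq_bot']
      intro t ht
      have hmem : j t ∈ N := by
        rw [← Submodule.Quotient.mk_eq_zero]
        exact ht
      obtain ⟨y, hy, hyv⟩ := hmem
      have hyj : y = j' t := Subtype.ext hyv
      rw [hyj] at hy
      have h0 : rA (j' t) = 0 := hy
      rw [hrA' t] at h0
      exact h0
    have hq''sur : Function.Surjective q'' := by
      intro b
      obtain ⟨e0, he⟩ := hp b
      obtain ⟨f, hf⟩ := hq e0
      exact ⟨N.mkQ f, by show p (q f) = b; rw [hf, he]⟩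
    have hkq'' : LinearMap.range j'' = LinearMap.ker q'' := by
      ext z
      constructor
      · rintro ⟨t, rfl⟩
        show q'' (j'' t) = 0
        show p (q (j t)) = 0
        rw [hqj t, map_zero]
      · intro hz
        obtain ⟨f, rfl⟩ := N.mkQ_surjective z
        have hz' : p (q f) = 0 := hz
        have hfFA : f ∈ FA := by
          show q f ∈ LinearMap.range i.hom
          rw [hip]
          exact hz'
        refine ⟨rA ⟨f, hfFA⟩, ?_⟩
        show N.mkQ (j (rA ⟨f, hfFA⟩)) = N.mkQ f
        have hmem : j (rA ⟨f, hfFA⟩) - f ∈ N := by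
          set t := rA (⟨f, hfFA⟩ : FA) with htdef
          have hm1 : j t - f ∈ FA := by
            show q (j t - f) ∈ LinearMap.range i.hom
            rw [map_sub, hqj t, zero_sub]
            exact neg_mem hfFA
          refine ⟨⟨j t - f, hm1⟩, ?_, rfl⟩
          show rA ⟨j t - f, hm1⟩ = 0
          have hsplit : (⟨j t - f, hm1⟩ : FA) = j' t - ⟨f, hfFA⟩ := Subtype.ext rfl
          rw [hsplit, map_sub, hrA' t, htdef, sub_self]
        rw [Submodule.mkQ_apply, Submodule.mkQ_apply, Submodule.Quotient.eq]
        exact hmem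
    obtain ⟨ρ, hρ⟩ := IHB (ModuleCat.of Λ (F ⧸ N)) (ModuleCat.ofHom j'') (ModuleCat.ofHom q'') ⟨hj''inj, hq''sur, hkq''⟩
    refine ⟨ModuleCat.ofHom (ρ.hom ∘ₗ N.mkQ), ?_⟩
    ext t
    exact ConcreteCategory.congr_hom hρ t

/-- Let `Λ` be a finite-dimensional hereditary algebra. Then every
semibrick pair `X = Sp ⊔ Sn[1]` is singly left mutation compatible: for every `S ∈ Sp`
and `T ∈ Sn`, any left minimal `Filt S`-approximation `g : T ⟶ A` is a monomorphism or
an epimorphism. -/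
theorem stmt15 {K : Type} [Field K] {Λ : Type} [Ring Λ] [Algebra K Λ] [FiniteDimensional K Λ]
    (hher : ∀ (P M : ModuleCat Λ), Projective P → ∀ f : M ⟶ P, Mono f → Projective M)
    (Sp Sn : Set (ModuleCat Λ)) (hX : IsSemibrickPair Sp Sn) :
    ∀ S ∈ Sp, ∀ T ∈ Sn, ∀ (A : ModuleCat Λ) (g : T ⟶ A),
      IsMinLeftApprox S g → Mono g ∨ Epi g := by
  intro S hS T hT A g hg
  obtain ⟨hFilt, _happrox, hmin⟩ := hg
  by_cases hinj : Function.Injective g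
  · exact Or.inl ((ModuleCat.mono_iff_injective g).mpr hinj)
  right
  rw [ModuleCat.epi_iff_surjective]
  by_contra hsur
  -- a kernel element t₀
  obtain ⟨a₁, b₁, hab, hne⟩ := Function.not_injective_iff.mp hinj
  have ht₀ne : a₁ - b₁ ≠ 0 := sub_ne_zero.mpr hne
  have ht₀ : g.hom (a₁ - b₁) = 0 := by rw [map_sub, hab, sub_self]
  set t₀ : T := a₁ - b₁ with ht₀def
  -- an element not in the image
  rw [Function.Surjective] at hsur
  push_neg at hsur
  obtain ⟨a₀, ha₀⟩ := hsur
  have ha₀r : a₀ ∉ LinearMap.range g.hom := by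
    rintro ⟨t, ht⟩
    exact ha₀ t ht
  -- notation
  let πC := (LinearMap.range g.hom).mkQ
  have hmk0 : ∀ y : A, πC y = 0 ↔ y ∈ LinearMap.range g.hom := fun y =>
    Submodule.Quotient.mk_eq_zero _
  let ℓ : (A →₀ Λ) →ₗ[Λ] A := Finsupp.linearCombination Λ id
  have hℓ : Function.Surjective ℓ := Finsupp.linearCombination_id_surjective Λ A
  let π : (A →₀ Λ) →ₗ[Λ] _ := πC ∘ₗ ℓ
  let Rm := LinearMap.ker π
  -- Rm is projective (hereditary!)
  have hPproj : Projective (ModuleCat.of Λ (ULift (A →₀ Λ))) :=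
    ModuleCat.projective_of_free
      ((Finsupp.basisSingleOne (R := Λ) (ι := A)).map ULift.moduleEquiv.symm)
  let ιh : ModuleCat.of Λ (ULift (↥Rm)) ⟶ ModuleCat.of Λ (ULift (A →₀ Λ)) :=
    ModuleCat.ofHom ((ULift.moduleEquiv.symm.toLinearMap) ∘ₗ Rm.subtype ∘ₗ ULift.moduleEquiv.toLinearMap)
  have hmono : Mono ιh := (ModuleCat.mono_iff_injective ιh).mpr (by
    intro x y hxy
    apply (ULift.moduleEquiv (R := Λ) (M := ↥Rm)).injective
    apply Submodule.injective_subtype Rm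
    exact (ULift.moduleEquiv (R := Λ) (M := (A →₀ Λ))).symm.injective hxy)
  have hRproj : Projective (ModuleCat.of Λ (ULift (↥Rm))) :=
    hher (ModuleCat.of Λ (ULift (A →₀ Λ))) (ModuleCat.of Λ (ULift (↥Rm))) hPproj ιh hmono
  haveI hRmod0 : Module.Projective Λ (ULift (↥Rm)) := (IsProjective.iff_projective _).mpr hRproj
  haveI hRmod : Module.Projective Λ (↥Rm) :=
    Module.Projective.of_equiv (ULift.moduleEquiv : ULift (↥Rm) ≃ₗ[Λ] ↥Rm)
  -- lift ℓ|Rm along T ↠ im g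
  have hℓR : ∀ x : Rm, ℓ x.val ∈ LinearMap.range g.hom := fun x => by
    have hx : πC (ℓ x.val) = 0 := x.2
    exact (hmk0 _).mp hx
  obtain ⟨ρ, hρ0⟩ := Module.projective_lifting_property (R := Λ)
    g.hom.rangeRestrict
    (LinearMap.codRestrict (LinearMap.range g.hom) (ℓ ∘ₗ Rm.subtype) hℓR)
    g.hom.surjective_rangeRestrict
  have hgρ : ∀ x : Rm, g.hom (ρ x) = ℓ x.val := fun x =>
    congrArg Subtype.val (LinearMap.congr_fun hρ0 x)
  -- the extension E = (T × P) ⧸ W of C by T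
  let μ : Rm →ₗ[Λ] T × (A →₀ Λ) := LinearMap.prod ρ (-(Rm.subtype))
  let W := LinearMap.range μ
  let u : T →ₗ[Λ] ((T × (A →₀ Λ)) ⧸ W) := W.mkQ ∘ₗ LinearMap.inl Λ T (A →₀ Λ)
  have hWv : W ≤ LinearMap.ker (π ∘ₗ LinearMap.snd Λ T (A →₀ Λ)) := by
    rintro x ⟨r, rfl⟩
    show π (-(r.val)) = 0
    have hr : π r.val = 0 := r.2
    rw [map_neg, hr, neg_zero]
  let v := W.liftQ _ hWv
  have hWθ : W ≤ LinearMap.ker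
      (g.hom ∘ₗ LinearMap.fst Λ T (A →₀ Λ) + ℓ ∘ₗ LinearMap.snd Λ T (A →₀ Λ)) := by
    rintro x ⟨r, rfl⟩
    show g.hom (ρ r) + ℓ (-(r.val)) = 0
    rw [hgρ r, map_neg, add_neg_cancel]
  let θ := W.liftQ _ hWθ
  have hθu : ∀ t : T, θ (u t) = g.hom t := fun t => by
    show g.hom t + ℓ 0 = g.hom t
    rw [map_zero, add_zero]
  have hπθ : ∀ z, πC (θ z) = v z := fun z => by
    obtain ⟨⟨t, x⟩, rfl⟩ := W.mkQ_surjective z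
    show πC (g.hom t + ℓ x) = π x
    rw [map_add, (hmk0 _).mpr (LinearMap.mem_range_self _ t), zero_add]
    rfl
  have hu_inj : Function.Injective u := by
    rw [← LinearMap.ker_eq_bot, LinearMap.ker_eq_bot']
    intro t ht
    have hmem : ((t, 0) : T × (A →₀ Λ)) ∈ W := by
      rw [← Submodule.Quotient.mk_eq_zero]
      exact ht
    obtain ⟨r, hr⟩ := hmem
    have h2 : -(r.val) = 0 := congrArg Prod.snd hr
    have h3 : r = 0 := Subtype.ext (neg_eq_zero.mp h2)
    have h4 : ρ r = t := congrArg Prod.fst hr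
    rw [← h4, h3, map_zero]
  have hvu : ∀ t : T, v (u t) = 0 := fun t => map_zero π
  have hπsur : Function.Surjective π := fun c => by
    obtain ⟨a, rfl⟩ := (LinearMap.range g.hom).mkQ_surjective c
    obtain ⟨x, hx⟩ := hℓ a
    exact ⟨x, by show πC (ℓ x) = πC a; rw [hx]⟩
  have hv_sur : Function.Surjective v := fun c => by
    obtain ⟨x, hx⟩ := hπsur c
    exact ⟨W.mkQ (0, x), hx⟩
  have hker_v : LinearMap.ker v = LinearMap.range u := by
    ext z
    constructor
    · intro hz
      obtain ⟨⟨t, x⟩, rfl⟩ := W.mkQ_surjective z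
      have hz' : π x = 0 := hz
      refine ⟨t + ρ ⟨x, hz'⟩, ?_⟩
      show W.mkQ (t + ρ ⟨x, hz'⟩, 0) = W.mkQ (t, x)
      rw [Submodule.mkQ_apply, Submodule.mkQ_apply, Submodule.Quotient.eq]
      refine ⟨⟨x, hz'⟩, ?_⟩
      show (ρ ⟨x, hz'⟩, -(x : A →₀ Λ)) = (t + ρ ⟨x, hz'⟩, 0) - (t, x)
      rw [Prod.mk_sub_mk]
      refine Prod.ext_iff.mpr ⟨?_, ?_⟩
      · show ρ ⟨x, hz'⟩ = t + ρ ⟨x, hz'⟩ - t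
        abel
      · show -x = 0 - x
        rw [zero_sub]
    · rintro ⟨t, rfl⟩
      exact hvu t
  -- pullback X of A → C ← E
  let Xsub : Submodule Λ (A × ((T × (A →₀ Λ)) ⧸ W)) :=
    LinearMap.ker (πC ∘ₗ LinearMap.fst Λ A _ - v ∘ₗ LinearMap.snd Λ A _)
  have hmemX : ∀ z : A × ((T × (A →₀ Λ)) ⧸ W), z ∈ Xsub ↔ πC z.1 - v z.2 = 0 :=
    fun z => Iff.rfl
  let jX : T →ₗ[Λ] Xsub := LinearMap.codRestrict Xsub (LinearMap.prod 0 u) (fun t => by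
    rw [hmemX]
    show πC 0 - v (u t) = 0
    rw [map_zero, hvu, sub_zero])
  let qX : Xsub →ₗ[Λ] A := LinearMap.fst Λ A _ ∘ₗ Xsub.subtype
  have hjX_inj : Function.Injective jX := fun x y hxy =>
    hu_inj (congrArg (fun z : Xsub => z.val.2) hxy)
  have hqX_sur : Function.Surjective qX := fun a => by
    obtain ⟨e0, he0⟩ := hv_sur (πC a)
    exact ⟨⟨(a, e0), by show πC a - v e0 = 0; rw [he0, sub_self]⟩, rfl⟩
  have hkX : LinearMap.range jX = LinearMap.ker qX := by
    ext x
    constructor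
    · rintro ⟨t, rfl⟩
      show (0 : A) = 0
      rfl
    · intro hx
      have hx1 : x.val.1 = 0 := hx
      have hx2 : v x.val.2 = 0 := by
        have hm : πC x.val.1 - v x.val.2 = 0 := x.2
        rw [hx1, map_zero, zero_sub, neg_eq_zero] at hm
        exact hm
      have hx3 : x.val.2 ∈ LinearMap.range u := hker_v ▸ hx2
      obtain ⟨t, ht⟩ := hx3
      exact ⟨t, Subtype.ext (Prod.ext_iff.mpr ⟨hx1.symm, ht⟩)⟩
  -- split the pullback extension using Filt S
  obtain ⟨hbSp, hbSn, horthp, horthn, hhom, hExt⟩ := hX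
  obtain ⟨rX, hrX⟩ := filt_split (fun F j q hses => hExt S hS T hT F j q hses) hFilt
    (ModuleCat.of Λ Xsub) (ModuleCat.ofHom jX) (ModuleCat.ofHom qX) ⟨hjX_inj, hqX_sur, hkX⟩
  obtain ⟨s, hs⟩ := aux_sec_of_retr jX qX hqX_sur hkX rX.hom
    (fun t => ConcreteCategory.congr_hom hrX t)
  let w : A →ₗ[Λ] ((T × (A →₀ Λ)) ⧸ W) := LinearMap.snd Λ A _ ∘ₗ Xsub.subtype ∘ₗ s
  have hvw : ∀ a : A, v (w a) = πC a := fun a => by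
    have hm : πC (s a).val.1 - v (s a).val.2 = 0 := (s a).2
    have h1 : (s a).val.1 = a := hs a
    rw [h1] at hm
    show v (s a).val.2 = πC a
    exact (sub_eq_zero.mp hm).symm
  -- the endomorphism ψ of T
  have hwg : ∀ t : T, w (g.hom t) ∈ LinearMap.range u := fun t => by
    rw [← hker_v]
    show v (w (g.hom t)) = 0
    rw [hvw]
    exact (hmk0 _).mpr (LinearMap.mem_range_self _ t)
  let euT := LinearEquiv.ofInjective u hu_inj
  let ψ : T →ₗ[Λ] T := (euT.symm : LinearMap.range u →ₗ[Λ] T) ∘ₗ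
    LinearMap.codRestrict (LinearMap.range u) (w ∘ₗ g.hom) hwg
  have huψ : ∀ t : T, u (ψ t) = w (g.hom t) := fun t => by
    show u (euT.symm ⟨w (g.hom t), hwg t⟩) = w (g.hom t)
    have h := euT.apply_symm_apply ⟨w (g.hom t), hwg t⟩
    calc u (euT.symm ⟨w (g.hom t), hwg t⟩)
        = ((euT (euT.symm ⟨w (g.hom t), hwg t⟩)) : (T × (A →₀ Λ)) ⧸ W) := by
          rw [LinearEquiv.ofInjective_apply]
      _ = w (g.hom t) := by rw [h]
  have hψt₀ : ψ t₀ = 0 := hu_inj (by rw [huψ t₀, ht₀, map_zero, map_zero])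
  have hψ0 : ψ = 0 := by
    by_contra hne
    have hiso := (hbSn T hT).2 (ModuleCat.ofHom ψ)
      (fun h => hne (by simpa using congrArg ModuleCat.Hom.hom h))
    have hinj' := aux_isiso_inj (ModuleCat.ofHom ψ) hiso
    exact ht₀ne (hinj' (by show ψ t₀ = ψ 0; rw [hψt₀, map_zero]))
  have hwg0 : ∀ t : T, w (g.hom t) = 0 := fun t => by
    rw [← huψ t, hψ0]
    exact map_zero u
  -- descend w to a section of v, get a section of πC
  have hwker : LinearMap.range g.hom ≤ LinearMap.ker w := by
    rintro x ⟨t, rfl⟩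
    exact hwg0 t
  let wbar := Submodule.liftQ (LinearMap.range g.hom) w hwker
  have hvwbar : ∀ c, v (wbar c) = c := fun c => by
    obtain ⟨a, rfl⟩ := (LinearMap.range g.hom).mkQ_surjective c
    show v (w a) = πC a
    exact hvw a
  let sC := θ ∘ₗ wbar
  have hπsC : ∀ c, πC (sC c) = c := fun c => by
    show πC (θ (wbar c)) = c
    rw [hπθ (wbar c), hvwbar c]
  -- contradiction with left minimality
  let φ : A →ₗ[Λ] A := LinearMap.id - sC ∘ₗ πC
  have hgφ : g ≫ ModuleCat.ofHom φ = g := by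
    ext t
    show g.hom t - sC (πC (g.hom t)) = g.hom t
    rw [(hmk0 _).mpr (LinearMap.mem_range_self _ t), map_zero, sub_zero]
  have hφiso := hmin (ModuleCat.ofHom φ) hgφ
  have hφinj : Function.Injective φ := aux_isiso_inj (ModuleCat.ofHom φ) hφiso
  have hπa : πC a₀ ≠ 0 := fun h => ha₀r ((hmk0 a₀).mp h)
  have hπx : πC (sC (πC a₀)) = πC a₀ := hπsC (πC a₀)
  have hx0 : φ (sC (πC a₀)) = 0 := by
    show sC (πC a₀) - sC (πC (sC (πC a₀))) = 0
    rw [hπx, sub_self]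
  have hxne : sC (πC a₀) ≠ 0 := fun h => hπa (by rw [← hπx, h, map_zero])
  exact hxne (hφinj (by rw [hx0, map_zero]))
end
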